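/- arXiv:2402.13179 — 4 statements merged into one kernel-verified Lean document; each statement's English description precedes it below -/
import Mathlib

section
/- Let M be a left H-Hopf module over a Hopf algebra H in a braided monoidal category, with action α: H ⊗ M → M and coaction φ: M → H ⊗ M. Then the endomorphism ν := α ∘ (σ ⊗ 1_M) ∘ φ : M → M is idempotent, i.e., ν ∘ ν = ν. -/
open CategoryTheory MonoidalCategory BraidedCategory

universe v u

/-- A Hopf algebra object in a braided monoidal category, given by explicit
structure maps and axioms. -/
structure HopfAlg (C : Type u) [Category.{v} C] [MonoidalCategory C]
    [BraidedCategory C] where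
  H : C
  η : 𝟙_ C ⟶ H
  μ : H ⊗ H ⟶ H
  ε : H ⟶ 𝟙_ C
  δ : H ⟶ H ⊗ H
  σ : H ⟶ H
  mul_assoc : (μ ▷ H) ≫ μ = (α_ H H H).hom ≫ (H ◁ μ) ≫ μ
  one_mul : (η ▷ H) ≫ μ = (λ_ H).hom
  mul_one : (H ◁ η) ≫ μ = (ρ_ H).hom
  coassoc : δ ≫ (δ ▷ H) = δ ≫ (H ◁ δ) ≫ (α_ H H H).inv
  counit_left : δ ≫ (ε ▷ H) = (λ_ H).inv
  counit_right : δ ≫ (H ◁ ε) = (ρ_ H).inv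
  mul_counit : μ ≫ ε = (ε ⊗ₘ ε) ≫ (λ_ (𝟙_ C)).hom
  one_counit : η ≫ ε = 𝟙 (𝟙_ C)
  mul_comul : μ ≫ δ = (δ ⊗ₘ δ) ≫ tensorμ H H H H ≫ (μ ⊗ₘ μ)
  one_comul : η ≫ δ = (λ_ (𝟙_ C)).inv ≫ (η ⊗ₘ η)
  antipode_left : δ ≫ (σ ▷ H) ≫ μ = ε ≫ η
  antipode_right : δ ≫ (H ◁ σ) ≫ μ = ε ≫ η

/-- A left Hopf module over a Hopf algebra object `A` in a braided monoidal
category: a left `A`-module and left `A`-comodule satisfying the Hopf module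
compatibility law. -/
structure HopfModule {C : Type u} [Category.{v} C] [MonoidalCategory C]
    [BraidedCategory C] (A : HopfAlg C) where
  M : C
  act : A.H ⊗ M ⟶ M
  coact : M ⟶ A.H ⊗ M
  act_mul : (A.μ ▷ M) ≫ act = (α_ A.H A.H M).hom ≫ (A.H ◁ act) ≫ act
  act_one : (A.η ▷ M) ≫ act = (λ_ M).hom
  coact_comul : coact ≫ (A.δ ▷ M) = coact ≫ (A.H ◁ coact) ≫ (α_ A.H A.H M).inv
  coact_counit : coact ≫ (A.ε ▷ M) = (λ_ M).inv
  compat : act ≫ coact = (A.δ ⊗ₘ coact) ≫ tensorμ A.H A.H A.H M ≫ (A.μ ⊗ₘ act)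

/-!
By the Hopf module law and the anti-multiplicativity of the antipode,
`ν(h • m) = σ(h₁ m₋₁) h₂ • m₀ = σ(m₋₁) σ(h₁) h₂ • m₀ = ε(h) ν(m)`.
Since `ν = α ∘ (σ ⊗ 1) ∘ φ`, this gives `ν ∘ ν = ν ∘ λ ∘ (εσ ⊗ 1) ∘ φ`,
and `εσ = ε` together with the counit law for `φ` collapses this to `ν`.
-/

namespace HopfAlg

variable {C : Type u} [Category.{v} C] [MonoidalCategory C] [BraidedCategory C]

abbrev toHopfObj (A : HopfAlg C) : HopfObj A.H where
  one := A.η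
  mul := A.μ
  one_mul := A.one_mul
  mul_one := A.mul_one
  mul_assoc := A.mul_assoc
  counit := A.ε
  comul := A.δ
  counit_comul := A.counit_left
  comul_counit := A.counit_right
  comul_assoc := by
    rw [← cancel_mono (α_ A.H A.H A.H).inv]
    simpa using A.coassoc.symm
  mul_comul := A.mul_comul
  one_comul := A.one_comul
  mul_counit := A.mul_counit
  one_counit := A.one_counit
  antipode := A.σ
  antipode_left := A.antipode_left
  antipode_right := A.antipode_right

theorem mul_antipode (A : HopfAlg C) :
    A.μ ≫ A.σ = (A.σ ⊗ₘ A.σ) ≫ (β_ A.H A.H).hom ≫ A.μ :=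
  @HopfObj.mul_antipode C _ _ _ A.H A.toHopfObj

theorem antipode_counit (A : HopfAlg C) : A.σ ≫ A.ε = A.ε :=
  @HopfObj.antipode_counit C _ _ _ A.H A.toHopfObj

/-- `σ(h₁ k) h₂ = ε(h) σ(k)`. -/
theorem antipode_mul_mul_comul (A : HopfAlg C) :
    (A.δ ▷ A.H) ≫ (α_ A.H A.H A.H).hom ≫ (A.H ◁ (β_ A.H A.H).hom) ≫ (α_ A.H A.H A.H).inv ≫
        ((A.μ ≫ A.σ) ▷ A.H) ≫ A.μ =
      (A.ε ▷ A.H) ≫ (λ_ A.H).hom ≫ A.σ := by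
  calc _ = (β_ A.H A.H).hom ≫ (A.σ ⊗ₘ (A.δ ≫ (A.σ ▷ A.H) ≫ A.μ)) ≫ A.μ := by
        -- `σ(h₁ k) = σ(k) σ(h₁)`, and the crossings of `h₂` past `k` and of `σ(h₁)` past `σ(k)`
        -- merge into a single crossing of `h` past `k` (`braiding_tensor_left_hom`).
        rw [mul_antipode, comp_whiskerRight, comp_whiskerRight]
        simp only [Category.assoc]
        slice_lhs 7 8 => rw [A.mul_assoc]
        slice_lhs 5 6 => rw [← comp_whiskerRight, braiding_naturality A.σ A.σ, comp_whiskerRight]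
        slice_lhs 6 7 => rw [← tensorHom_id, associator_naturality]
        slice_lhs 7 8 => rw [← id_tensorHom, tensorHom_comp_tensorHom, Category.comp_id, tensorHom_id]
        slice_lhs 2 6 => rw [← braiding_tensor_left_hom]
        slice_lhs 1 2 => rw [braiding_naturality_left]
        slice_lhs 2 3 => rw [← id_tensorHom, tensorHom_comp_tensorHom, Category.id_comp]
    _ = (β_ A.H A.H).hom ≫ (A.σ ⊗ₘ (A.ε ≫ A.η)) ≫ A.μ := by rw [A.antipode_left]
    _ = (A.H ◁ A.σ) ≫ (A.ε ▷ A.H) ≫ (β_ (𝟙_ C) A.H).hom ≫ (ρ_ A.H).hom := by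
        rw [MonoidalCategory.tensorHom_def, MonoidalCategory.whiskerLeft_comp, Category.assoc,
          Category.assoc, A.mul_one, braiding_naturality_left_assoc, braiding_naturality_right_assoc]
    _ = _ := by
        rw [braiding_rightUnitor, whisker_exchange_assoc, leftUnitor_naturality]

end HopfAlg

namespace HopfModule

variable {C : Type u} [Category.{v} C] [MonoidalCategory C] [BraidedCategory C]
  {A : HopfAlg C}

def nu (N : HopfModule A) : N.M ⟶ N.M :=
  N.coact ≫ (A.σ ▷ N.M) ≫ N.act

theorem act_nu (N : HopfModule A) :
    N.act ≫ N.nu = (A.ε ▷ N.M) ≫ (λ_ N.M).hom ≫ N.nu := by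
  have act_act : (A.H ◁ N.act) ≫ N.act = (α_ A.H A.H N.M).inv ≫ (A.μ ▷ N.M) ≫ N.act := by
    rw [N.act_mul, Iso.inv_hom_id_assoc]
  calc N.act ≫ N.nu
      = (A.δ ⊗ₘ N.coact) ≫ tensorμ A.H A.H A.H N.M ≫ ((A.μ ≫ A.σ) ⊗ₘ N.act) ≫ N.act := by
        rw [nu, reassoc_of% N.compat, ← tensorHom_id, tensorHom_comp_tensorHom_assoc,
          Category.comp_id]
    _ = (A.H ◁ N.coact) ≫ (α_ A.H A.H N.M).inv ≫
          (((A.ε ▷ A.H) ≫ (λ_ A.H).hom ≫ A.σ) ▷ N.M) ≫ N.act := by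
        rw [← A.antipode_mul_mul_comul, tensorHom_def' A.δ N.coact,
          MonoidalCategory.tensorHom_def (A.μ ≫ A.σ) N.act]
        simp only [Category.assoc, act_act, tensorμ]
        monoidal
    _ = (A.ε ▷ N.M) ≫ (λ_ N.M).hom ≫ N.nu := by
        simp only [comp_whiskerRight, Category.assoc, nu]
        rw [← associator_inv_naturality_left_assoc, ← leftUnitor_tensor_hom_assoc,
          whisker_exchange_assoc, leftUnitor_naturality_assoc]

theorem nu_nu (N : HopfModule A) : N.nu ≫ N.nu = N.nu := by
  calc N.nu ≫ N.nu = N.coact ≫ (A.σ ▷ N.M) ≫ N.act ≫ N.nu := by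
        simp only [nu, Category.assoc]
    _ = N.coact ≫ ((A.σ ≫ A.ε) ▷ N.M) ≫ (λ_ N.M).hom ≫ N.nu := by
        rw [act_nu, comp_whiskerRight_assoc]
    _ = N.nu := by
        rw [A.antipode_counit, reassoc_of% N.coact_counit, Iso.inv_hom_id_assoc]

end HopfModule

/-- The endomorphism ν = α ∘ (σ ⊗ 1) ∘ φ of a Hopf module is idempotent. -/
theorem nu_idempotent {C : Type u} [Category.{v} C] [MonoidalCategory C]
    [BraidedCategory C] (A : HopfAlg C) (N : HopfModule A) :
    (N.coact ≫ (A.σ ▷ N.M) ≫ N.act) ≫ (N.coact ≫ (A.σ ▷ N.M) ≫ N.act) =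
      N.coact ≫ (A.σ ▷ N.M) ≫ N.act :=
  N.nu_nu
end

section
/- Let M be a left H-Hopf module with action α, coaction φ, and ν := α ∘ (σ ⊗ 1_M) ∘ φ. Then φ ∘ ν = (η ⊗ 1_M) ∘ ν, i.e., the coaction of the image of ν is trivial. -/
open CategoryTheory MonoidalCategory BraidedCategory

universe v u

/-!
Write `φ m = m₋₁ ⊗ m₀`, so that `ν m = S(m₋₁) m₀`. The Hopf module law together with
coassociativity of `φ` gives `φ (g(m₋₁) m₀) = g(m₋₂)₁ m₋₁ ⊗ g(m₋₂)₂ m₀` for every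
`g : H ⟶ H` (braidings suppressed). For `g = S` the antipode is a braided anti-coalgebra
map, so `S(h₁)₁ h₂ ⊗ S(h₁)₂ = S(h₂) h₃ ⊗ S(h₁) = ε(h₂) ⊗ S(h₁) = 1 ⊗ S(h)`, and hence
`φ (ν m) = 1 ⊗ ν m`.
-/

section

variable {C : Type u} [Category.{v} C] [MonoidalCategory C] [BraidedCategory C]

theorem braiding_tensorHom_whiskerRight_hexagon {X X' Y Y' Z : C} (f : X ⟶ X') (g : Y ⟶ Y') :
    ((β_ X Y).hom ≫ (g ⊗ₘ f)) ▷ Z ≫ (α_ Y' X' Z).hom ≫ Y' ◁ (β_ X' Z).hom ≫ (α_ Y' Z X').inv =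
      (α_ X Y Z).hom ≫ (β_ X (Y ⊗ Z)).hom ≫ (g ▷ Z ⊗ₘ f) := by
  rw [← braiding_naturality, comp_whiskerRight, Category.assoc, ← braiding_naturality,
    braiding_tensor_right_hom]
  simp [MonoidalCategory.tensorHom_def]

namespace HopfAlg

theorem antipode_comul (A : HopfAlg C) :
    A.σ ≫ A.δ = A.δ ≫ (β_ A.H A.H).hom ≫ (A.σ ⊗ₘ A.σ) :=
  letI : HopfObj A.H :=
    { one := A.η
      mul := A.μ
      one_mul := A.one_mul
      mul_one := A.mul_one
      mul_assoc := A.mul_assoc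
      counit := A.ε
      comul := A.δ
      counit_comul := A.counit_left
      comul_counit := A.counit_right
      comul_assoc := by simp [reassoc_of% A.coassoc]
      mul_comul := A.mul_comul
      one_comul := by rw [A.one_comul]; rfl
      mul_counit := by simpa using A.mul_counit
      one_counit := A.one_counit
      antipode := A.σ
      antipode_left := A.antipode_left
      antipode_right := A.antipode_right }
  HopfObj.antipode_comul A.H

/-- `h ↦ g(h₁)₁ h₂ ⊗ g(h₁)₂`, with `g(h₁)₂` braided past `h₂`. -/
noncomputable def twistedComul (A : HopfAlg C) (g : A.H ⟶ A.H) : A.H ⟶ A.H ⊗ A.H :=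
  A.δ ≫ (g ≫ A.δ) ▷ A.H ≫ (α_ A.H A.H A.H).hom ≫ A.H ◁ (β_ A.H A.H).hom ≫
    (α_ A.H A.H A.H).inv ≫ A.μ ▷ A.H

theorem twistedComul_antipode (A : HopfAlg C) :
    A.twistedComul A.σ = A.σ ≫ (λ_ A.H).inv ≫ A.η ▷ A.H := by
  have comul_coassoc : A.δ ≫ A.δ ▷ A.H ≫ (α_ A.H A.H A.H).hom = A.δ ≫ A.H ◁ A.δ := by
    simp [reassoc_of% A.coassoc]
  calc A.twistedComul A.σ
      = A.δ ≫ A.δ ▷ A.H ≫ ((β_ A.H A.H).hom ≫ (A.σ ⊗ₘ A.σ)) ▷ A.H ≫ (α_ A.H A.H A.H).hom ≫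
          A.H ◁ (β_ A.H A.H).hom ≫ (α_ A.H A.H A.H).inv ≫ A.μ ▷ A.H := by
        simp [twistedComul, antipode_comul]
    _ = A.δ ≫ A.δ ▷ A.H ≫ (α_ A.H A.H A.H).hom ≫ (β_ A.H (A.H ⊗ A.H)).hom ≫
          (A.σ ▷ A.H ⊗ₘ A.σ) ≫ A.μ ▷ A.H := by
        rw [reassoc_of% braiding_tensorHom_whiskerRight_hexagon]
    _ = A.δ ≫ (β_ A.H A.H).hom ≫ ((A.δ ≫ A.σ ▷ A.H ≫ A.μ) ⊗ₘ A.σ) := by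
        rw [reassoc_of% comul_coassoc, braiding_naturality_right_assoc, tensorHom_comp_whiskerRight,
          whiskerRight_comp_tensorHom]
    _ = A.σ ≫ (λ_ A.H).inv ≫ A.η ▷ A.H := by
        rw [A.antipode_left, ← tensorHom_comp_whiskerRight, ← braiding_naturality_assoc,
          tensorHom_def', Category.assoc, reassoc_of% A.counit_right, braiding_tensorUnit_right]
        simp

end HopfAlg

namespace HopfModule

variable {A : HopfAlg C}

theorem coact_whiskerLeft_coact (N : HopfModule A) :
    N.coact ≫ A.H ◁ N.coact = N.coact ≫ A.δ ▷ N.M ≫ (α_ A.H A.H N.M).hom := by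
  simp [reassoc_of% N.coact_comul]

theorem coact_whiskerRight_act_coact (N : HopfModule A) (g : A.H ⟶ A.H) :
    N.coact ≫ g ▷ N.M ≫ N.act ≫ N.coact =
      N.coact ≫ A.twistedComul g ▷ N.M ≫ (α_ A.H A.H N.M).hom ≫ A.H ◁ N.act := by
  rw [N.compat, tensorHom_def', Category.assoc, ← whisker_exchange_assoc,
    reassoc_of% N.coact_whiskerLeft_coact, MonoidalCategory.tensorHom_def A.μ,
    HopfAlg.twistedComul, tensorμ]
  monoidal

end HopfModule

end

/-- φ ∘ ν = (η ⊗ 1) ∘ ν : the coaction of the image of ν is trivial. -/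
theorem coact_comp_nu {C : Type u} [Category.{v} C] [MonoidalCategory C]
    [BraidedCategory C] (A : HopfAlg C) (N : HopfModule A) :
    (N.coact ≫ (A.σ ▷ N.M) ≫ N.act) ≫ N.coact =
      (N.coact ≫ (A.σ ▷ N.M) ≫ N.act) ≫ (λ_ N.M).inv ≫ (A.η ▷ N.M) := by
  simp only [Category.assoc]
  rw [N.coact_whiskerRight_act_coact, A.twistedComul_antipode]
  simp only [comp_whiskerRight, Category.assoc]
  rw [associator_naturality_left_assoc, ← whisker_exchange, leftUnitor_inv_whiskerRight_assoc,
    Iso.inv_hom_id_assoc, ← leftUnitor_inv_naturality_assoc]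
end

section
/- Let M be a left H-Hopf module with splitting ι: M^H → M, υ: M → M^H of the idempotent ν. Define ξ := α ∘ (1_H ⊗ ι) : H ⊗ M^H → M and ψ := (1_H ⊗ υ) ∘ φ : M → H ⊗ M^H. Then ξ ∘ ψ = 1_M. -/
open CategoryTheory MonoidalCategory BraidedCategory

universe v u

/-! Since `υ ≫ ι = ν`, the composite `ξ ∘ ψ` is `α ∘ (1 ⊗ ν) ∘ φ`. Coassociativity of `φ` and
associativity of `α` rewrite this as `α ∘ ((μ ∘ (1 ⊗ σ) ∘ δ) ⊗ 1) ∘ φ`; the antipode axiom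
turns the inner map into `η ∘ ε`, and the unit and counit laws of `α` and `φ` leave `1_M`. -/

namespace HopfModule

variable {C : Type u} [Category.{v} C] [MonoidalCategory C] [BraidedCategory C]
  {A : HopfAlg C} (N : HopfModule A)

/-- The idempotent `ν = α ∘ (σ ⊗ 1) ∘ φ`, projecting onto the coinvariants. -/
def proj : N.M ⟶ N.M := N.coact ≫ (A.σ ▷ N.M) ≫ N.act

theorem whiskerLeft_act_act :
    (A.H ◁ N.act) ≫ N.act = (α_ A.H A.H N.M).inv ≫ (A.μ ▷ N.M) ≫ N.act := by
  rw [N.act_mul, Iso.inv_hom_id_assoc]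

theorem coact_counit_unit_act : N.coact ≫ ((A.ε ≫ A.η) ▷ N.M) ≫ N.act = 𝟙 N.M := by
  rw [comp_whiskerRight, Category.assoc, N.act_one, reassoc_of% N.coact_counit, Iso.inv_hom_id]

theorem coact_whiskerLeft_proj_act : N.coact ≫ (A.H ◁ N.proj) ≫ N.act = 𝟙 N.M := by
  calc N.coact ≫ (A.H ◁ N.proj) ≫ N.act
      = (N.coact ≫ (A.H ◁ N.coact) ≫ (α_ A.H A.H N.M).inv) ≫
          ((A.H ◁ A.σ) ▷ N.M) ≫ (A.μ ▷ N.M) ≫ N.act := by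
        simp only [proj, whiskerLeft_comp, Category.assoc, N.whiskerLeft_act_act,
          associator_inv_naturality_middle_assoc]
    _ = N.coact ≫ ((A.δ ≫ (A.H ◁ A.σ) ≫ A.μ) ▷ N.M) ≫ N.act := by
        rw [← N.coact_comul]
        simp only [comp_whiskerRight, Category.assoc]
    _ = 𝟙 N.M := by rw [A.antipode_right, N.coact_counit_unit_act]

end HopfModule

theorem xi_comp_psi_general {C : Type u} [Category.{v} C] [MonoidalCategory C]
    [BraidedCategory C] (A : HopfAlg C) (N : HopfModule A)
    (MH : C) (ι : MH ⟶ N.M) (υ : N.M ⟶ MH)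
    (h2 : υ ≫ ι = N.coact ≫ (A.σ ▷ N.M) ≫ N.act) :
    (N.coact ≫ (A.H ◁ υ)) ≫ ((A.H ◁ ι) ≫ N.act) = 𝟙 N.M := by
  have hν : υ ≫ ι = N.proj := h2
  rw [Category.assoc, ← whiskerLeft_comp_assoc, hν, N.coact_whiskerLeft_proj_act]

/-- With ξ = α ∘ (1 ⊗ ι) and ψ = (1 ⊗ υ) ∘ φ, one has ξ ∘ ψ = 1. -/
theorem xi_comp_psi {C : Type u} [Category.{v} C] [MonoidalCategory C]
    [BraidedCategory C] (A : HopfAlg C) (N : HopfModule A)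
    (MH : C) (ι : MH ⟶ N.M) (υ : N.M ⟶ MH)
    (h1 : ι ≫ υ = 𝟙 MH)
    (h2 : υ ≫ ι = N.coact ≫ (A.σ ▷ N.M) ≫ N.act) :
    (N.coact ≫ (A.H ◁ υ)) ≫ ((A.H ◁ ι) ≫ N.act) = 𝟙 N.M :=
  xi_comp_psi_general A N MH ι υ h2
end

section
/- The map ξ := α ∘ (1_H ⊗ ι) : H ⊗ M^H → M is a morphism of left H-comodules, i.e., φ ∘ ξ = (1_H ⊗ ξ) ∘ (δ ⊗ 1_{M^H}), where the coaction on H ⊗ M^H is δ ⊗ 1_{M^H}. -/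
open CategoryTheory MonoidalCategory BraidedCategory

universe v u

/-!
For `m` coinvariant the Hopf compatibility law gives `φ (h • m) = h₁ · 1 ⊗ h₂ • m`: the braiding
that `tensorμ` performs only moves `h₂` past the unit, which is trivial, and `h₁ · 1 = h₁`.
-/

lemma whiskerLeft_leftUnitor_inv_comp_tensorμ {C : Type u} [Category.{v} C] [MonoidalCategory C]
    [BraidedCategory C] (X Y Z : C) :
    (X ⊗ Y) ◁ (λ_ Z).inv ≫ tensorμ X Y (𝟙_ C) Z = (α_ X Y Z).hom ≫ (ρ_ X).inv ▷ (Y ⊗ Z) := by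
  simp only [tensorμ, braiding_tensorUnit_right]
  monoidal

namespace HopfAlg

variable {C : Type u} [Category.{v} C] [MonoidalCategory C] [BraidedCategory C] (A : HopfAlg C)

lemma comul_tensorHom_one_comp_tensorμ_comp_mul_tensorHom {Y Z : C} (g : A.H ⊗ Y ⟶ Z) :
    (A.δ ⊗ₘ ((λ_ Y).inv ≫ A.η ▷ Y)) ≫ tensorμ A.H A.H A.H Y ≫ (A.μ ⊗ₘ g) =
      A.δ ▷ Y ≫ (α_ A.H A.H Y).hom ≫ A.H ◁ g := by
  rw [← tensorHom_id, MonoidalCategory.tensorHom_def, whiskerLeft_comp, Category.assoc,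
    Category.assoc, tensorμ_natural_right_assoc, tensorHom_comp_tensorHom, A.mul_one,
    whiskerLeft_id, Category.id_comp, reassoc_of% whiskerLeft_leftUnitor_inv_comp_tensorμ,
    whiskerRight_comp_tensorHom, Iso.inv_hom_id, id_tensorHom]

end HopfAlg

/-- If φ ∘ ι = (η ⊗ 1) ∘ ι, then ξ = α ∘ (1 ⊗ ι) is a morphism of left
H-comodules from H ⊗ M^H (with coaction δ ⊗ 1) to M. -/
theorem xi_comodule_map {C : Type u} [Category.{v} C] [MonoidalCategory C]
    [BraidedCategory C] (A : HopfAlg C) (N : HopfModule A)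
    (MH : C) (ι : MH ⟶ N.M)
    (hι : ι ≫ N.coact = ι ≫ (λ_ N.M).inv ≫ (A.η ▷ N.M)) :
    ((A.H ◁ ι) ≫ N.act) ≫ N.coact =
      (A.δ ▷ MH) ≫ (α_ A.H A.H MH).hom ≫ (A.H ◁ ((A.H ◁ ι) ≫ N.act)) := by
  calc ((A.H ◁ ι) ≫ N.act) ≫ N.coact
      = (A.δ ⊗ₘ (ι ≫ N.coact)) ≫ tensorμ _ _ _ _ ≫ (A.μ ⊗ₘ N.act) := by
        rw [Category.assoc, N.compat, whiskerLeft_comp_tensorHom_assoc]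
    _ = (A.H ◁ ι) ≫ (A.δ ⊗ₘ ((λ_ N.M).inv ≫ A.η ▷ N.M)) ≫ tensorμ _ _ _ _ ≫ (A.μ ⊗ₘ N.act) := by
        rw [hι, whiskerLeft_comp_tensorHom_assoc]
    _ = (A.H ◁ ι) ≫ A.δ ▷ N.M ≫ (α_ A.H A.H N.M).hom ≫ A.H ◁ N.act := by
        rw [A.comul_tensorHom_one_comp_tensorμ_comp_mul_tensorHom]
    _ = _ := by
        rw [whisker_exchange_assoc, associator_naturality_right_assoc, whiskerLeft_comp]
end
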